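/- arXiv:1509.09100 — 3 statements merged into one kernel-verified Lean document; each statement's English description precedes it below -/
import Mathlib

section
/- Let R > 0 and R_μ > 0. Then for all real numbers f ≥ 0, g ≥ 0, X and Y, the following inequality holds: (fX + RgY)² ≤ 2·max{1, √R/R_μ}·(f² + R(f+g)²)^{1/2}·(fX² + R R_μ g Y²). -/
/-- The pointwise inequality used in the proof of Lemma 2.2:
`(fX + RgY)² ≤ 2 max{1, √R/Rμ} (f² + R(f+g)²)^{1/2} (fX² + R Rμ g Y²)`
for all `f, g ≥ 0` and `X, Y ∈ ℝ`. -/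
theorem pointwise_gradient_estimate (R Rμ : ℝ) (hR : 0 < R) (hRμ : 0 < Rμ)
    (f g X Y : ℝ) (hf : 0 ≤ f) (hg : 0 ≤ g) :
    (f * X + R * g * Y) ^ 2 ≤
      2 * max 1 (Real.sqrt R / Rμ) * Real.sqrt (f ^ 2 + R * (f + g) ^ 2) *
        (f * X ^ 2 + R * Rμ * g * Y ^ 2) := by
  set M := max 1 (Real.sqrt R / Rμ) with hMdef
  set S := Real.sqrt (f ^ 2 + R * (f + g) ^ 2) with hSdef
  have hSnn : 0 ≤ S := Real.sqrt_nonneg _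
  have hrR : 0 ≤ Real.sqrt R := Real.sqrt_nonneg _
  have hRsq : Real.sqrt R * Real.sqrt R = R := Real.mul_self_sqrt hR.le
  have hfS : f ≤ S := by
    have : f = Real.sqrt (f ^ 2) := (Real.sqrt_sq hf).symm
    rw [this, hSdef]
    apply Real.sqrt_le_sqrt
    nlinarith [sq_nonneg (f + g)]
  have hgS : Real.sqrt R * g ≤ S := by
    have h1 : Real.sqrt R * g = Real.sqrt (R * g ^ 2) := by
      rw [Real.sqrt_mul hR.le, Real.sqrt_sq hg]
    rw [h1, hSdef]
    apply Real.sqrt_le_sqrt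
    nlinarith [sq_nonneg f, mul_nonneg hf hg]
  have hM1 : (1 : ℝ) ≤ M := le_max_left _ _
  have hM2 : Real.sqrt R / Rμ ≤ M := le_max_right _ _
  have hM0 : 0 ≤ M := le_trans zero_le_one hM1
  have hQ : 0 ≤ f * X ^ 2 + R * Rμ * g * Y ^ 2 := by positivity
  -- Step 2: Rμ * f + R * g ≤ Rμ * (2 * M * S)
  have hsR : Real.sqrt R ≤ M * Rμ := by
    rw [div_le_iff₀ hRμ] at hM2; linarith
  have step2 : Rμ * f + R * g ≤ Rμ * (2 * M * S) := by
    have h1 : f ≤ M * S := le_trans hfS (by nlinarith)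
    have h2 : R * g ≤ Rμ * M * S := by
      have h3 : Real.sqrt R * (Real.sqrt R * g) ≤ (M * Rμ) * S :=
        mul_le_mul hsR hgS (by positivity) (by positivity)
      nlinarith
    nlinarith
  -- Step 1 (Cauchy–Schwarz):
  have step1 : Rμ * (f * X + R * g * Y) ^ 2 ≤
      (Rμ * f + R * g) * (f * X ^ 2 + R * Rμ * g * Y ^ 2) := by
    nlinarith [mul_nonneg (mul_nonneg hR.le (mul_nonneg hf hg)) (sq_nonneg (X - Rμ * Y))]
  have := le_trans step1 (mul_le_mul_of_nonneg_right step2 hQ)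
  have hfin : Rμ * ((f * X + R * g * Y) ^ 2) ≤ Rμ * (2 * M * S * (f * X ^ 2 + R * Rμ * g * Y ^ 2)) := by
    nlinarith
  exact le_of_mul_le_mul_left hfin hRμ
end

section
/- For every r > 0 and every v ∈ L²((−r,r)) one has ‖v‖_{L^{4/3}((−r,r))} ≤ 4·‖v‖_{L²((−r,r))}^{6/7}·I_r(v)^{3/28}, where I_r(v) := ∫_{−r}^{r} (r−|x|)₊² |v(x)|^{4/3} dx. -/
open MeasureTheory Set Filter Topology
open scoped ENNReal

/-!
Fix `δ > 0`. Away from the boundary strip `r - δ < |x|` the weight `(r - |x|)₊²` is at least `δ²`,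
so that part of `∫ |v|^{4/3}` is at most `δ⁻² I_r(v)`. The strip has length at most `2δ`, so by
Hölder with exponents `3/2` and `3` its part is at most `‖v‖₂^{4/3} (2δ)^{1/3}`. Minimising
`a δ^{1/3} + b δ^{-2}` over `δ` gives `2 a^{6/7} b^{1/7}`, which is the claimed bound with
constant `2^{27/28} ≤ 4` after raising to the power `3/4`.
-/

theorem le_two_mul_rpow_mul_rpow_of_forall_le {A a b p q : ℝ} (ha : 0 ≤ a) (hb : 0 ≤ b)
    (hp : 0 < p) (hq : 0 < q) (h : ∀ δ > 0, A ≤ a * δ ^ p + b * δ ^ (-q)) :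
    A ≤ 2 * (a ^ (q / (p + q)) * b ^ (p / (p + q))) := by
  have hpq : 0 < p + q := add_pos hp hq
  rcases ha.lt_or_eq with ha | rfl
  · rcases hb.lt_or_eq with hb | rfl
    · -- the two terms balance at `δ = (b / a) ^ (1 / (p + q))`
      set δ := (b / a) ^ (1 / (p + q))
      have hδ : 0 < δ := by positivity
      have factor (c : ℝ) (hc : 0 < c) : c = c ^ (q / (p + q)) * c ^ (p / (p + q)) := by
        rw [← Real.rpow_add hc, ← add_div, add_comm, div_self hpq.ne', Real.rpow_one]
      have hδp : δ ^ p * a ^ (p / (p + q)) = b ^ (p / (p + q)) := by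
        rw [← Real.rpow_mul (by positivity), one_div_mul_eq_div,
          ← Real.mul_rpow (by positivity) ha.le, div_mul_cancel₀ b ha.ne']
      have hδq : δ ^ (-q) * b ^ (q / (p + q)) = a ^ (q / (p + q)) := by
        rw [← Real.rpow_mul (by positivity), one_div_mul_eq_div, neg_div,
          Real.rpow_neg (by positivity),
          ← Real.inv_rpow (by positivity), inv_div, ← Real.mul_rpow (by positivity) hb.le,
          div_mul_cancel₀ a hb.ne']
      have h₁ : a * δ ^ p = a ^ (q / (p + q)) * b ^ (p / (p + q)) := by
        rw [← hδp]
        nth_rewrite 1 [factor a ha]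
        ring
      have h₂ : b * δ ^ (-q) = a ^ (q / (p + q)) * b ^ (p / (p + q)) := by
        rw [← hδq]
        nth_rewrite 1 [factor b hb]
        ring
      linarith [h δ hδ]
    · -- let `δ → 0⁺`
      rw [Real.zero_rpow (div_pos hp hpq).ne', mul_zero, mul_zero]
      have hlim : Tendsto (fun δ : ℝ => a * δ ^ p) (𝓝[>] 0) (𝓝 0) := by
        simpa [Real.zero_rpow hp.ne'] using
          ((Real.continuousAt_rpow_const 0 p (Or.inr hp.le)).tendsto.const_mul a).mono_left
            nhdsWithin_le_nhds
      exact ge_of_tendsto hlim (eventually_mem_nhdsWithin.mono fun δ hδ => by simpa using h δ hδ)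
  · -- let `δ → ∞`
    rw [Real.zero_rpow (div_pos hq hpq).ne', zero_mul, mul_zero]
    have hlim : Tendsto (fun δ : ℝ => b * δ ^ (-q)) atTop (𝓝 0) := by
      simpa using (tendsto_rpow_neg_atTop hq).const_mul b
    exact ge_of_tendsto hlim ((eventually_gt_atTop 0).mono fun δ hδ => by simpa using h δ hδ)

theorem MeasureTheory.MemLp.abs_rpow {α : Type*} [MeasurableSpace α] {μ : Measure α} {f : α → ℝ}
    {s : ℝ} (hs : 0 < s) (hf : MemLp f 2 μ) :
    MemLp (fun x => |f x| ^ s) (ENNReal.ofReal (2 / s)) μ := by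
  have h := hf.norm_rpow_div (ENNReal.ofReal s)
  rwa [ENNReal.toReal_ofReal hs.le, ← ENNReal.ofReal_ofNat 2,
    ← ENNReal.ofReal_div_of_pos hs] at h

theorem volume_real_abs_gt_inter_Ioo_le (r : ℝ) {δ : ℝ} (hδ : 0 ≤ δ) :
    volume.real ({x : ℝ | r - δ < |x|} ∩ Ioo (-r) r) ≤ 2 * δ := by
  have hsub : {x : ℝ | r - δ < |x|} ∩ Ioo (-r) r ⊆ Ioo (-r) (δ - r) ∪ Ioo (r - δ) r := by
    rintro x ⟨hx : r - δ < |x|, hxl, hxr⟩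
    rcases le_or_gt 0 x with h | h
    · exact Or.inr ⟨by rwa [abs_of_nonneg h] at hx, hxr⟩
    · exact Or.inl ⟨hxl, by rw [abs_of_neg h] at hx; linarith⟩
  calc volume.real ({x : ℝ | r - δ < |x|} ∩ Ioo (-r) r)
      ≤ volume.real (Ioo (-r) (δ - r)) + volume.real (Ioo (r - δ) r) :=
        (measureReal_mono hsub
          (measure_union_lt_top measure_Ioo_lt_top measure_Ioo_lt_top).ne).trans
            (measureReal_union_le _ _)
    _ = 2 * δ := by
        rw [Real.volume_real_Ioo, Real.volume_real_Ioo, max_eq_left (by linarith),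
          max_eq_left (by linarith)]
        ring

theorem setIntegral_abs_rpow_le {α : Type*} [MeasurableSpace α] {μ : Measure α} {f : α → ℝ}
    {s : ℝ} (hs₀ : 0 < s) (hs₂ : s < 2) (hf : MemLp f 2 μ) {S : Set α} (hS : μ S ≠ ∞) :
    ∫ x in S, |f x| ^ s ∂μ ≤ (∫ x, f x ^ 2 ∂μ) ^ (s / 2) * μ.real S ^ (1 - s / 2) := by
  have : IsFiniteMeasure (μ.restrict S) := isFiniteMeasure_restrict.2 hS
  have hconj : (2 / s).HolderConjugate (2 / (2 - s)) :=
    Real.holderConjugate_iff.2 ⟨by rw [lt_div_iff₀ hs₀]; linarith, by field_simp; ring⟩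
  have holder := integral_mul_le_Lp_mul_Lq_of_nonneg hconj
    (ae_of_all _ fun x => Real.rpow_nonneg (abs_nonneg (f x)) s) (ae_of_all _ fun _ => zero_le_one)
    ((hf.restrict S).abs_rpow hs₀) (memLp_const 1)
  have hsq (x : α) : (|f x| ^ s) ^ (2 / s) = f x ^ 2 := by
    rw [← Real.rpow_mul (abs_nonneg _), mul_div_cancel₀ _ hs₀.ne', Real.rpow_two, sq_abs]
  have hL2 : ∫ x in S, f x ^ 2 ∂μ ≤ ∫ x, f x ^ 2 ∂μ :=
    setIntegral_le_integral hf.integrable_sq (ae_of_all _ fun x => sq_nonneg (f x))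
  simp only [mul_one, Real.one_rpow, hsq, integral_const, smul_eq_mul,
    measureReal_restrict_apply_univ] at holder
  calc ∫ x in S, |f x| ^ s ∂μ
      ≤ (∫ x in S, f x ^ 2 ∂μ) ^ (s / 2) * μ.real S ^ (1 - s / 2) := by
        convert holder using 3 <;> field_simp
    _ ≤ (∫ x, f x ^ 2 ∂μ) ^ (s / 2) * μ.real S ^ (1 - s / 2) := by
        gcongr

theorem integral_le_setIntegral_add_integral_mul_div {α : Type*} [MeasurableSpace α]
    {μ : Measure α} {g w : α → ℝ} {S : Set α} {c : ℝ} (hc : 0 < c) (hS : MeasurableSet S)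
    (hg : 0 ≤ g) (hw₀ : 0 ≤ w) (hgi : Integrable g μ) (hwg : Integrable (fun x => w x * g x) μ)
    (hw : ∀ x ∉ S, c ≤ w x) :
    ∫ x, g x ∂μ ≤ ∫ x in S, g x ∂μ + (∫ x, w x * g x ∂μ) / c := by
  rw [← integral_add_compl hS hgi, ← integral_div]
  gcongr
  calc ∫ x in Sᶜ, g x ∂μ ≤ ∫ x in Sᶜ, w x * g x / c ∂μ := by
        refine setIntegral_mono_on hgi.integrableOn (hwg.div_const c).integrableOn hS.compl
          fun x hx => ?_
        rw [le_div_iff₀ hc, mul_comm]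
        exact mul_le_mul_of_nonneg_right (hw x hx) (hg x)
    _ ≤ ∫ x, w x * g x / c ∂μ := by
        refine setIntegral_le_integral (hwg.div_const c) (ae_of_all _ fun x => ?_)
        exact div_nonneg (mul_nonneg (hw₀ x) (hg x)) hc.le

theorem integral_Ioo_abs_rpow_le {r s : ℝ} {v : ℝ → ℝ} (hs₀ : 0 < s) (hs₂ : s < 2)
    (hv : MemLp v 2 (volume.restrict (Ioo (-r) r))) {δ : ℝ} (hδ : 0 < δ) :
    ∫ x in Ioo (-r) r, |v x| ^ s ≤
      (∫ x in Ioo (-r) r, v x ^ 2) ^ (s / 2) * 2 ^ (1 - s / 2) * δ ^ (1 - s / 2) +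
        (∫ x in Ioo (-r) r, max (r - |x|) 0 ^ 2 * |v x| ^ s) * δ ^ (-2 : ℝ) := by
  set S := {x : ℝ | r - δ < |x|}
  have hS : MeasurableSet S := measurableSet_lt measurable_const continuous_abs.measurable
  have hint : Integrable (fun x => |v x| ^ s) (volume.restrict (Ioo (-r) r)) :=
    (hv.abs_rpow hs₀).integrable
      (by rw [← ENNReal.ofReal_one]; exact ENNReal.ofReal_le_ofReal ((one_le_div hs₀).2 hs₂.le))
  have hweight (x : ℝ) : ‖max (r - |x|) 0 ^ 2‖ ≤ max r 0 ^ 2 := by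
    rw [Real.norm_eq_abs, abs_of_nonneg (by positivity)]
    exact pow_le_pow_left₀ (le_max_right _ _)
      (max_le_max_right 0 (by linarith [abs_nonneg x])) 2
  have hwint := hint.bdd_mul (by fun_prop) (ae_of_all _ hweight)
  have hsplit := integral_le_setIntegral_add_integral_mul_div (pow_pos hδ 2) hS
    (fun x => Real.rpow_nonneg (abs_nonneg (v x)) s) (fun x => by positivity) hint hwint
    fun x (hx : ¬ r - δ < |x|) =>
      pow_le_pow_left₀ hδ.le (le_max_of_le_left (by linarith [not_lt.1 hx])) 2
  have hstrip := setIntegral_abs_rpow_le hs₀ hs₂ hv (S := S) (measure_ne_top _ _)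
  rw [measureReal_restrict_apply hS] at hstrip
  have hmeas : volume.real (S ∩ Ioo (-r) r) ^ (1 - s / 2) ≤ 2 ^ (1 - s / 2) * δ ^ (1 - s / 2) := by
    rw [← Real.mul_rpow zero_le_two hδ.le]
    exact Real.rpow_le_rpow measureReal_nonneg (volume_real_abs_gt_inter_Ioo_le r hδ.le)
      (by linarith)
  have hB : 0 ≤ (∫ x in Ioo (-r) r, v x ^ 2) ^ (s / 2) :=
    Real.rpow_nonneg (integral_nonneg fun x => sq_nonneg (v x)) _
  rw [Real.rpow_neg hδ.le, Real.rpow_two, ← div_eq_mul_inv, mul_assoc]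
  linarith [mul_le_mul_of_nonneg_left hmeas hB]

theorem rpow_three_fourths_le_of_le {A B I : ℝ} (hA : 0 ≤ A) (hB : 0 ≤ B) (hI : 0 ≤ I)
    (hAB : A ≤ 2 * ((B ^ (2 / 3 : ℝ) * 2 ^ (1 / 3 : ℝ)) ^ (6 / 7 : ℝ) * I ^ (1 / 7 : ℝ))) :
    A ^ ((3:ℝ) / 4) ≤ 4 * (B ^ ((1:ℝ) / 2)) ^ ((6:ℝ) / 7) * I ^ ((3:ℝ) / 28) := by
  have hrhs :
      (2 * ((B ^ (2 / 3 : ℝ) * 2 ^ (1 / 3 : ℝ)) ^ (6 / 7 : ℝ) * I ^ (1 / 7 : ℝ))) ^ (3 / 4 : ℝ) =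
        2 ^ (27 / 28 : ℝ) * ((B ^ ((1:ℝ) / 2)) ^ ((6:ℝ) / 7) * I ^ ((3:ℝ) / 28)) := by
    rw [Real.mul_rpow (by positivity) (by positivity),
      Real.mul_rpow (by positivity) (by positivity),
      Real.mul_rpow (by positivity) (by positivity),
      Real.mul_rpow (by positivity) (by positivity)]
    simp only [← Real.rpow_mul hB, ← Real.rpow_mul hI, ← Real.rpow_mul zero_le_two]
    rw [mul_comm (B ^ _), mul_assoc, ← mul_assoc (2 ^ _), ← Real.rpow_add two_pos]
    norm_num
  have h2 : (2:ℝ) ^ (27 / 28 : ℝ) ≤ 4 := by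
    calc (2:ℝ) ^ (27 / 28 : ℝ) ≤ 2 ^ (1 : ℝ) :=
          Real.rpow_le_rpow_of_exponent_le one_le_two (by norm_num)
      _ ≤ 4 := by norm_num
  calc A ^ ((3:ℝ) / 4) ≤ _ := Real.rpow_le_rpow hA hAB (by norm_num)
    _ = _ := hrhs
    _ ≤ _ := by rw [mul_assoc]; gcongr

theorem interpolation_L43_general (r : ℝ) (v : ℝ → ℝ)
    (hv : MemLp v 2 (volume.restrict (Ioo (-r) r))) :
    (∫ x in Ioo (-r) r, |v x| ^ ((4:ℝ) / 3)) ^ ((3:ℝ) / 4) ≤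
      4 * ((∫ x in Ioo (-r) r, (v x) ^ 2) ^ ((1:ℝ) / 2)) ^ ((6:ℝ) / 7) *
        (∫ x in Ioo (-r) r, max (r - |x|) 0 ^ 2 * |v x| ^ ((4:ℝ) / 3)) ^ ((3:ℝ) / 28) := by
  set A := ∫ x in Ioo (-r) r, |v x| ^ ((4:ℝ) / 3)
  set B := ∫ x in Ioo (-r) r, (v x) ^ 2
  set I := ∫ x in Ioo (-r) r, max (r - |x|) 0 ^ 2 * |v x| ^ ((4:ℝ) / 3)
  have hB : 0 ≤ B := integral_nonneg fun x => sq_nonneg (v x)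
  have hI : 0 ≤ I := integral_nonneg fun x => by positivity
  refine rpow_three_fourths_le_of_le (integral_nonneg fun x => by positivity) hB hI ?_
  have h := le_two_mul_rpow_mul_rpow_of_forall_le (A := A) (a := B ^ (2 / 3 : ℝ) * 2 ^ (1 / 3 : ℝ))
    (by positivity) hI (by norm_num : (0:ℝ) < 1 / 3) two_pos fun δ hδ => by
      convert integral_Ioo_abs_rpow_le (s := 4 / 3) (by norm_num) (by norm_num) hv hδ using 3 <;>
        norm_num [B]
  norm_num at h
  exact h

/-- Inequality (2.6): for every `r > 0` and `v ∈ L²((-r,r))`,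
`‖v‖_{4/3} ≤ 4 ‖v‖₂^{6/7} I_r(v)^{3/28}` where
`I_r(v) = ∫_{-r}^{r} (r-|x|)₊² |v|^{4/3} dx`. -/
theorem interpolation_L43 (r : ℝ) (hr : 0 < r) (v : ℝ → ℝ)
    (hv : MemLp v 2 (volume.restrict (Ioo (-r) r))) :
    (∫ x in Ioo (-r) r, |v x| ^ ((4:ℝ) / 3)) ^ ((3:ℝ) / 4) ≤
      4 * ((∫ x in Ioo (-r) r, (v x) ^ 2) ^ ((1:ℝ) / 2)) ^ ((6:ℝ) / 7) *
        (∫ x in Ioo (-r) r, max (r - |x|) 0 ^ 2 * |v x| ^ ((4:ℝ) / 3)) ^ ((3:ℝ) / 28) :=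
  interpolation_L43_general r v hv
end

section
/- Let C₆ > 0, T > 0 and r₀ > 0. Let u₁ : [r₀/2, r₀] → [0,∞) be nondecreasing and absolutely continuous, and let u₀ := ∂ᵣu₁ ≥ 0 denote its derivative (defined almost everywhere). Assume that u₁(r)^{5/6} ≤ (T^{1/3}/(6C₆))·u₀(r) for almost every r ∈ (r₀/2, r₀), and that T^{1/3}·u₁(r₀)^{1/6} ≤ C₆·r₀/2. Then u₁(r₀/2) = 0. -/
/-!
Write `v = u₁^{1/6}` and `c = C₆ / T^{1/3}`. Where `u₁ > 0` the differential inequality says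
`v' ≥ c`, so `u₁(r₀/2) > 0` would force `v(r₀) ≥ v(r₀/2) + c r₀/2 > c r₀/2`, against the
smallness assumption on `u₁(r₀)`. To avoid differentiating `v`, monotonicity turns the
hypothesis into the secant bound `u₁ z - u₁ x ≥ 6c u₁(x)^{5/6} (z - x)`, and the fencing
theorem compares `u₁` with the strict subsolutions `(v(r₀/2) + c' (t - r₀/2))^6`, `c' < c`.
-/

open MeasureTheory Set Filter Topology

theorem mul_sub_le_intervalIntegral_of_ae_le {f : ℝ → ℝ} {m x z : ℝ} (hxz : x ≤ z)
    (hf : IntervalIntegrable f volume x z) (h : ∀ᵐ r ∂volume.restrict (Ioo x z), m ≤ f r) :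
    m * (z - x) ≤ ∫ r in x..z, f r := by
  have h' : (fun _ => m) ≤ᵐ[volume.restrict (Icc x z)] f := by
    rwa [← Measure.restrict_congr_set Ioo_ae_eq_Icc]
  simpa [intervalIntegral.integral_const, mul_comm, hxz] using
    intervalIntegral.integral_mono_ae_restrict hxz intervalIntegrable_const hf h'

theorem continuousOn_of_sub_eq_intervalIntegral {u u' : ℝ → ℝ} {a b : ℝ} (hab : a ≤ b)
    (hint : IntervalIntegrable u' volume a b)
    (hac : ∀ x z, a ≤ x → x ≤ z → z ≤ b → u z - u x = ∫ r in x..z, u' r) :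
    ContinuousOn u (Icc a b) := by
  have hprim := intervalIntegral.continuousOn_primitive_interval' hint left_mem_uIcc
  rw [uIcc_of_le hab] at hprim
  refine (hprim.const_add (u a)).congr fun t ht => ?_
  linarith [hac a t le_rfl ht.1 ht.2]

theorem rpow_mul_sub_le_mul_sub_of_ae_le {u u' : ℝ → ℝ} {a b k q : ℝ} (hq : 0 ≤ q)
    (hnonneg : ∀ r ∈ Icc a b, 0 ≤ u r) (hmono : MonotoneOn u (Icc a b))
    (hint : IntervalIntegrable u' volume a b)
    (hac : ∀ x z, a ≤ x → x ≤ z → z ≤ b → u z - u x = ∫ r in x..z, u' r)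
    (hineq : ∀ᵐ r ∂volume.restrict (Ioo a b), u r ^ q ≤ k * u' r)
    {x z : ℝ} (hx : a ≤ x) (hxz : x ≤ z) (hz : z ≤ b) :
    u x ^ q * (z - x) ≤ k * (u z - u x) := by
  have hxI : x ∈ Icc a b := ⟨hx, hxz.trans hz⟩
  have hle : ∀ᵐ r ∂volume.restrict (Ioo x z), u x ^ q ≤ k * u' r := by
    filter_upwards [ae_restrict_of_ae_restrict_of_subset (Ioo_subset_Ioo hx hz) hineq,
      ae_restrict_mem measurableSet_Ioo] with r hr hrI
    have hrI' : r ∈ Icc a b := ⟨hx.trans hrI.1.le, hrI.2.le.trans hz⟩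
    exact (Real.rpow_le_rpow (hnonneg x hxI) (hmono hxI hrI' hrI.1.le) hq).trans hr
  have hint' : IntervalIntegrable u' volume x z := hint.mono_set <| by
    rw [uIcc_of_le hxz, uIcc_of_le (hx.trans (hxz.trans hz))]
    exact Icc_subset_Icc hx hz
  rw [hac x z hx hxz hz, ← intervalIntegral.integral_const_mul]
  exact mul_sub_le_intervalIntegral_of_ae_le hxz (hint'.const_mul k) hle

section Comparison

variable {u : ℝ → ℝ} {a b k p : ℝ} (hk : 0 < k) (hp : 1 ≤ p)
  (hu : ContinuousOn u (Icc a b)) (ha : 0 < u a)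
  (hslope : ∀ x ∈ Ico a b, ∀ z ∈ Ioc x b, u x ^ (1 - p⁻¹) * (z - x) ≤ k * (u z - u x))
include hk hp hu ha hslope

theorem add_mul_sub_rpow_le_of_slope_ge {c : ℝ} (hc : 0 ≤ c) (hck : c < (p * k)⁻¹) :
    ∀ t ∈ Icc a b, (u a ^ p⁻¹ + c * (t - a)) ^ p ≤ u t := by
  set y : ℝ → ℝ := fun t => u a ^ p⁻¹ + c * (t - a)
  have hy : ∀ t, a ≤ t → 0 < y t := fun t ht =>
    add_pos_of_pos_of_nonneg (Real.rpow_pos_of_pos ha _) (mul_nonneg hc (sub_nonneg.2 ht))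
  have hya : y a ^ p = u a := by
    simp only [y, sub_self, mul_zero, add_zero]
    rw [← Real.rpow_mul ha.le, inv_mul_cancel₀ (by linarith), Real.rpow_one]
  have hyderiv : ∀ t, HasDerivAt (fun t => y t ^ p) (c * p * y t ^ (p - 1)) t := fun t =>
    ((((hasDerivAt_id t).sub_const a).const_mul c).const_add _).rpow_const (Or.inr hp)
      |>.congr_deriv (by rw [mul_one]; rfl)
  intro t ht
  have := image_le_of_liminf_slope_right_lt_deriv_boundary (f := fun t => -u t)
    (f' := fun x => -(u x ^ (1 - p⁻¹) / k)) (B := fun t => -(y t ^ p))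
    (B' := fun t => -(c * p * y t ^ (p - 1))) hu.neg ?_ (by simp [hya])
    (fun t => (hyderiv t).neg) ?_ ht
  · simpa using this
  · intro x hx r hr
    refine Eventually.frequently ?_
    filter_upwards [Ioc_mem_nhdsGT hx.2] with z hz
    have hzx : 0 < z - x := sub_pos.2 hz.1
    have hincr : u x ^ (1 - p⁻¹) * (z - x) / k ≤ u z - u x :=
      (div_le_iff₀' hk).2 (hslope x hx z hz)
    rw [slope_def_field]
    refine lt_of_le_of_lt ?_ hr
    rw [div_le_iff₀ hzx]
    linarith [show -(u x ^ (1 - p⁻¹) / k) * (z - x) = -(u x ^ (1 - p⁻¹) * (z - x) / k) by ring]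
  · intro x hx hxy
    have hyx := hy x hx.1
    have hux : u x ^ (1 - p⁻¹) = y x ^ (p - 1) := by
      rw [show u x = y x ^ p by simpa using hxy, ← Real.rpow_mul hyx.le]
      congr 1
      field_simp
    have hpk : 0 < p * k := by positivity
    have hcpk : c * (p * k) < 1 := by
      simpa only [inv_mul_cancel₀ hpk.ne'] using mul_lt_mul_of_pos_right hck hpk
    have hY := Real.rpow_pos_of_pos hyx (p - 1)
    rw [hux, neg_lt_neg_iff, lt_div_iff₀ hk]
    nlinarith [mul_lt_mul_of_pos_right hcpk hY]

theorem add_div_le_rpow_inv_of_slope_ge {t : ℝ} (ht : t ∈ Icc a b) :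
    u a ^ p⁻¹ + (t - a) / (p * k) ≤ u t ^ p⁻¹ := by
  have hlim : Tendsto (fun c => u a ^ p⁻¹ + c * (t - a)) (𝓝[<] (p * k)⁻¹)
      (𝓝 (u a ^ p⁻¹ + (t - a) / (p * k))) := by
    rw [div_eq_inv_mul]
    exact tendsto_nhdsWithin_of_tendsto_nhds (by fun_prop : Continuous _).continuousAt
  refine le_of_tendsto hlim ?_
  filter_upwards [Ioo_mem_nhdsLT (by positivity : (0:ℝ) < (p * k)⁻¹)] with c hc
  have hpow := add_mul_sub_rpow_le_of_slope_ge hk hp hu ha hslope hc.1.le hc.2 t ht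
  have hy : 0 ≤ u a ^ p⁻¹ + c * (t - a) :=
    add_nonneg (Real.rpow_nonneg ha.le _) (mul_nonneg hc.1.le (sub_nonneg.2 ht.1))
  exact (Real.le_rpow_inv_iff_of_pos hy ((Real.rpow_nonneg hy p).trans hpow)
    (by linarith)).2 hpow

end Comparison

theorem ode_argument_general (C₆ T r₀ : ℝ) (hC₆ : 0 < C₆) (hT : 0 < T) (hr₀ : 0 < r₀)
    (u₁ u₀ : ℝ → ℝ)
    (hnonneg : ∀ r ∈ Icc (r₀ / 2) r₀, 0 ≤ u₁ r)
    (hmono : MonotoneOn u₁ (Icc (r₀ / 2) r₀))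
    (hint : IntervalIntegrable u₀ volume (r₀ / 2) r₀)
    (hac : ∀ a b : ℝ, r₀ / 2 ≤ a → a ≤ b → b ≤ r₀ →
      u₁ b - u₁ a = ∫ r in a..b, u₀ r)
    (hineq : ∀ᵐ r ∂(volume.restrict (Ioo (r₀ / 2) r₀)),
      (u₁ r) ^ ((5:ℝ) / 6) ≤ T ^ ((1:ℝ) / 3) / (6 * C₆) * u₀ r)
    (hsmall : T ^ ((1:ℝ) / 3) * (u₁ r₀) ^ ((1:ℝ) / 6) ≤ C₆ * (r₀ / 2)) :
    u₁ (r₀ / 2) = 0 := by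
  have hr : r₀ / 2 ≤ r₀ := by linarith
  have hT3 : 0 < T ^ ((1:ℝ) / 3) := Real.rpow_pos_of_pos hT _
  by_contra hne
  have hpos : 0 < u₁ (r₀ / 2) := (hnonneg _ ⟨le_rfl, hr⟩).lt_of_ne' hne
  have hslope : ∀ x ∈ Ico (r₀ / 2) r₀, ∀ z ∈ Ioc x r₀,
      u₁ x ^ (1 - (6:ℝ)⁻¹) * (z - x) ≤ T ^ ((1:ℝ) / 3) / (6 * C₆) * (u₁ z - u₁ x) := by
    intro x hx z hz
    rw [show (1:ℝ) - 6⁻¹ = 5 / 6 by norm_num]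
    exact rpow_mul_sub_le_mul_sub_of_ae_le (by norm_num) hnonneg hmono hint hac hineq
      hx.1 hz.1.le hz.2
  have hgrowth := add_div_le_rpow_inv_of_slope_ge (by positivity) (by norm_num)
    (continuousOn_of_sub_eq_intervalIntegral hr hint hac) hpos hslope ⟨hr, le_rfl⟩
  rw [show (r₀ - r₀ / 2) / (6 * (T ^ ((1:ℝ) / 3) / (6 * C₆))) = C₆ * (r₀ / 2) / T ^ ((1:ℝ) / 3)
    by field_simp; ring, ← one_div] at hgrowth
  have hscaled := mul_le_mul_of_nonneg_left hgrowth hT3.le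
  rw [mul_add, mul_div_cancel₀ _ hT3.ne'] at hscaled
  linarith [mul_pos hT3 (Real.rpow_pos_of_pos hpos ((1:ℝ) / 6))]

/-- The ODE argument in the proof of Theorem 1.1: if `u₁ ≥ 0` is nondecreasing and
absolutely continuous on `[r₀/2, r₀]` with derivative `u₀ ≥ 0` (a.e.), if
`u₁^{5/6} ≤ (T^{1/3}/(6C₆)) u₀` a.e. on `(r₀/2, r₀)` and
`T^{1/3} u₁(r₀)^{1/6} ≤ C₆ r₀/2`, then `u₁(r₀/2) = 0`. -/
theorem ode_argument (C₆ T r₀ : ℝ) (hC₆ : 0 < C₆) (hT : 0 < T) (hr₀ : 0 < r₀)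
    (u₁ u₀ : ℝ → ℝ)
    (hnonneg : ∀ r ∈ Icc (r₀ / 2) r₀, 0 ≤ u₁ r)
    (hmono : MonotoneOn u₁ (Icc (r₀ / 2) r₀))
    (hint : IntervalIntegrable u₀ volume (r₀ / 2) r₀)
    (hac : ∀ a b : ℝ, r₀ / 2 ≤ a → a ≤ b → b ≤ r₀ →
      u₁ b - u₁ a = ∫ r in a..b, u₀ r)
    (hderiv : ∀ᵐ r ∂(volume.restrict (Ioo (r₀ / 2) r₀)), HasDerivAt u₁ (u₀ r) r)
    (hu₀nonneg : ∀ᵐ r ∂(volume.restrict (Ioo (r₀ / 2) r₀)), 0 ≤ u₀ r)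
    (hineq : ∀ᵐ r ∂(volume.restrict (Ioo (r₀ / 2) r₀)),
      (u₁ r) ^ ((5:ℝ) / 6) ≤ T ^ ((1:ℝ) / 3) / (6 * C₆) * u₀ r)
    (hsmall : T ^ ((1:ℝ) / 3) * (u₁ r₀) ^ ((1:ℝ) / 6) ≤ C₆ * (r₀ / 2)) :
    u₁ (r₀ / 2) = 0 :=
  ode_argument_general C₆ T r₀ hC₆ hT hr₀ u₁ u₀ hnonneg hmono hint hac hineq hsmall
end
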